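/- arXiv:2605.17514 — 2 statements merged into one kernel-verified Lean document; each statement's English description precedes it below -/
import Mathlib

section
/- Let M ⊆ B(H) be a von Neumann algebra and K a Hilbert space. An operator x on H ⊗ K commutes with m' ⊗ 1 for all m' in the commutant M' if and only if x belongs to the von Neumann algebra generated by {m ⊗ t : m ∈ M, t ∈ B(K)} (i.e., the commutant of M' ⊗ ℂ1 equals M ⊗̄ B(K)). In the special case K = ℂ, an operator on H ⊗ ℂ commuting with all m' ⊗ 1, m' ∈ M', is of the form m ⊗ 1 for some m ∈ M'' = M. -/
open scoped ENNReal InnerProductSpace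
open ContinuousLinearMap

/-!
An operator `y` on `ℓ²(ι, H) = H ⊗ ℓ²(ι)` commuting with every `1 ⊗ t` commutes in particular
with the matrix units `1 ⊗ e_{kj}`, which forces `y = z ⊗ 1` for its diagonal corner `z`;
if `y` also commutes with `M ⊗ 1`, then `z ∈ M'` because `m ↦ m ⊗ 1` is injective. Conversely
`M' ⊗ 1` commutes with `M ⊗ 1` and with `1 ⊗ B(ℓ²(ι))`, so the commutant of
`{m ⊗ t : m ∈ M}` is exactly `M' ⊗ 1`. For `K = ℂ` the claim is the bicommutant theorem.
-/

namespace LpAmpliation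

variable {H : Type*} [NormedAddCommGroup H] [InnerProductSpace ℂ H] [CompleteSpace H]
  {ι : Type*} [DecidableEq ι]

noncomputable def matrixUnit (k j : ι) : lp (fun _ : ι => ℂ) 2 →L[ℂ] lp (fun _ : ι => ℂ) 2 :=
  (lp.singleContinuousLinearMap ℂ _ 2 k).comp (lp.evalCLM ℂ _ 2 j)

noncomputable def corner (i : ι) (y : lp (fun _ : ι => H) 2 →L[ℂ] lp (fun _ : ι => H) 2) :
    H →L[ℂ] H :=
  (lp.evalCLM ℂ _ 2 i).comp (y.comp (lp.singleContinuousLinearMap ℂ _ 2 i))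

section

variable
    (amp : (H →L[ℂ] H) →⋆ₐ[ℂ] (lp (fun _ : ι => H) 2 →L[ℂ] lp (fun _ : ι => H) 2))
    (hamp : ∀ (m : H →L[ℂ] H) (f : lp (fun _ : ι => H) 2) (i : ι),
      (amp m f : ∀ _ : ι, H) i = m (f i))
    (ampK : (lp (fun _ : ι => ℂ) 2 →L[ℂ] lp (fun _ : ι => ℂ) 2) →⋆ₐ[ℂ]
      (lp (fun _ : ι => H) 2 →L[ℂ] lp (fun _ : ι => H) 2))
    (hampK : ∀ (t : lp (fun _ : ι => ℂ) 2 →L[ℂ] lp (fun _ : ι => ℂ) 2)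
      (f : lp (fun _ : ι => H) 2) (i : ι),
      (ampK t f : ∀ _ : ι, H) i =
        ∑' j : ι, (⟪(lp.single 2 i (1 : ℂ) : lp (fun _ : ι => ℂ) 2),
          t (lp.single 2 j (1 : ℂ))⟫_ℂ) • f j)

include hamp in
lemma amp_single (m : H →L[ℂ] H) (j : ι) (h : H) :
    amp m (lp.single 2 j h) = lp.single 2 j (m h) := by
  ext i
  rw [hamp]
  by_cases hij : i = j
  · subst hij; simp only [lp.single_apply_self]
  · simp only [lp.single_apply_ne _ _ _ hij, map_zero]

include hampK in
lemma ampK_apply (t : lp (fun _ : ι => ℂ) 2 →L[ℂ] lp (fun _ : ι => ℂ) 2)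
    (f : lp (fun _ : ι => H) 2) (i : ι) :
    (ampK t f : ∀ _ : ι, H) i = ∑' l, (t (lp.single 2 l 1) : ι → ℂ) i • f l := by
  simp [hampK, lp.inner_single_left]

include hampK in
lemma ampK_single (t : lp (fun _ : ι => ℂ) 2 →L[ℂ] lp (fun _ : ι => ℂ) 2) (j i : ι) (h : H) :
    (ampK t (lp.single 2 j h) : ∀ _ : ι, H) i = (t (lp.single 2 j 1) : ι → ℂ) i • h := by
  rw [ampK_apply ampK hampK,
    tsum_eq_single j fun l hl => by rw [lp.single_apply_ne _ _ _ hl, smul_zero],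
    lp.single_apply_self]

include hampK in
lemma ampK_matrixUnit (k j : ι) (f : lp (fun _ : ι => H) 2) :
    ampK (matrixUnit k j) f = lp.single 2 k (f j) := by
  ext i
  rw [ampK_apply ampK hampK]
  rcases eq_or_ne i k with rfl | hik <;>
    simp [matrixUnit, lp.evalCLM, lp.single_apply, Pi.single_apply, *]

include hamp hampK in
lemma commute_amp_ampK (m : H →L[ℂ] H)
    (t : lp (fun _ : ι => ℂ) 2 →L[ℂ] lp (fun _ : ι => ℂ) 2) :
    Commute (amp m) (ampK t) := by
  refine lp.ext_continuousLinearMap ENNReal.ofNat_ne_top fun j => ?_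
  ext h i
  simp [amp_single amp hamp, hamp, ampK_single ampK hampK]

include hampK in
lemma single_eq_of_commute_ampK {y : lp (fun _ : ι => H) 2 →L[ℂ] lp (fun _ : ι => H) 2}
    (hy : ∀ t, Commute (ampK t) y) (k j : ι) (h : H) :
    y (lp.single 2 k h) = lp.single 2 k ((y (lp.single 2 j h) : ∀ _ : ι, H) j) := by
  have : ampK (matrixUnit k j) (y (lp.single 2 j h)) =
      y (ampK (matrixUnit k j) (lp.single 2 j h)) :=
    congr($(hy (matrixUnit k j)) (lp.single 2 j h))
  rwa [ampK_matrixUnit ampK hampK, ampK_matrixUnit ampK hampK, lp.single_apply_self,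
    eq_comm] at this

include hamp hampK in
lemma eq_amp_corner_of_commute_ampK {y : lp (fun _ : ι => H) 2 →L[ℂ] lp (fun _ : ι => H) 2}
    (hy : ∀ t, Commute (ampK t) y) (i : ι) : y = amp (corner i y) := by
  refine lp.ext_continuousLinearMap ENNReal.ofNat_ne_top fun k => ?_
  ext1 h
  simp [amp_single amp hamp, corner, lp.evalCLM, single_eq_of_commute_ampK ampK hampK hy k i h]

include hamp in
lemma amp_injective [Nonempty ι] : Function.Injective amp := by
  intro m m' hm
  ext h
  obtain ⟨i⟩ := ‹Nonempty ι›
  simpa [amp_single amp hamp] using congr($hm (lp.single 2 i h) i)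

include hamp hampK in
lemma centralizer_amp_mul_ampK (M : VonNeumannAlgebra H) :
    Set.centralizer {y | ∃ m ∈ M, ∃ t, y = amp m * ampK t} = amp '' M.commutant := by
  refine subset_antisymm (fun y hy => ?_) ?_
  · rw [Set.mem_centralizer_iff] at hy
    have hM : ∀ m ∈ M, amp m * y = y * amp m := fun m hm => by
      simpa using hy _ ⟨m, hm, 1, rfl⟩
    have hK : ∀ t, ampK t * y = y * ampK t := fun t => by
      simpa using hy _ ⟨1, one_mem M, t, rfl⟩
    rcases isEmpty_or_nonempty ι with hι | hι
    · have : Subsingleton (lp (fun _ : ι => H) 2) :=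
        ⟨fun _ _ => lp.ext (funext isEmptyElim)⟩
      exact ⟨0, zero_mem _, Subsingleton.elim _ _⟩
    have i : ι := hι.some
    have hy := eq_amp_corner_of_commute_ampK amp hamp ampK hampK hK i
    refine ⟨corner i y, VonNeumannAlgebra.mem_commutant_iff.2 fun m hm => ?_, hy.symm⟩
    apply amp_injective amp hamp
    rw [map_mul, map_mul, ← hy]
    exact hM m hm
  · rintro _ ⟨m', hm', rfl⟩ _ ⟨m, hm, t, rfl⟩
    have hmm' : Commute (amp m) (amp m') :=
      Commute.map (VonNeumannAlgebra.mem_commutant_iff.1 hm' m hm) amp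
    exact hmm'.mul_left (commute_amp_ampK amp hamp ampK hampK m' t).symm

end

end LpAmpliation

open LpAmpliation

theorem stmt_11_general {H : Type*} [NormedAddCommGroup H] [InnerProductSpace ℂ H]
    [CompleteSpace H] {ι : Type*} [DecidableEq ι]
    (M : VonNeumannAlgebra H)
    (amp : (H →L[ℂ] H) →⋆ₐ[ℂ]
      (lp (fun _ : ι => H) 2 →L[ℂ] lp (fun _ : ι => H) 2))
    (hamp : ∀ (m : H →L[ℂ] H) (f : lp (fun _ : ι => H) 2) (i : ι),
      (amp m f : ∀ _ : ι, H) i = m (f i))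
    (ampK : (lp (fun _ : ι => ℂ) 2 →L[ℂ] lp (fun _ : ι => ℂ) 2) →⋆ₐ[ℂ]
      (lp (fun _ : ι => H) 2 →L[ℂ] lp (fun _ : ι => H) 2))
    (hampK : ∀ (t : lp (fun _ : ι => ℂ) 2 →L[ℂ] lp (fun _ : ι => ℂ) 2)
      (f : lp (fun _ : ι => H) 2) (i : ι),
      (ampK t f : ∀ _ : ι, H) i =
        ∑' j : ι, (⟪(lp.single 2 i (1 : ℂ) : lp (fun _ : ι => ℂ) 2),
          t (lp.single 2 j (1 : ℂ))⟫_ℂ) • f j) :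
    (∀ x : lp (fun _ : ι => H) 2 →L[ℂ] lp (fun _ : ι => H) 2,
      (∀ m' ∈ M.commutant, amp m' * x = x * amp m') ↔
        x ∈ Set.centralizer (Set.centralizer
          {y | ∃ m ∈ M, ∃ t, y = amp m * ampK t})) ∧
    (∀ x : H →L[ℂ] H, (∀ m' ∈ M.commutant, m' * x = x * m') → x ∈ M) := by
  refine ⟨fun x => ?_, fun x hx => ?_⟩
  · rw [centralizer_amp_mul_ampK amp hamp ampK hampK M, Set.mem_centralizer_iff,
      Set.forall_mem_image]
    rfl
  · rw [← VonNeumannAlgebra.commutant_commutant M]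
    exact VonNeumannAlgebra.mem_commutant_iff.mpr hx

/-- Let `M ⊆ B(H)` be a von Neumann algebra and `K = ℓ²(ι)` a Hilbert
space; model `H ⊗ K` as `lp (fun _ : ι => H) 2`.  Let `amp m = m ⊗ 1` (componentwise
action) and `ampK t = 1 ⊗ t` (action of `t ∈ B(ℓ²(ι))` on the index side), given as
*-homomorphisms characterized on vectors.  Then an operator `x` on `H ⊗ K` commutes with
all `m' ⊗ 1`, `m' ∈ M'`, iff `x` lies in the von Neumann algebra generated by the
elementary tensors `{(m ⊗ 1)(1 ⊗ t) : m ∈ M, t ∈ B(K)}` (expressed as the double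
centralizer of that set); and, for `K = ℂ`, an operator on `H` commuting with all of
`M'` lies in `M`. -/
theorem stmt_11 {H : Type*} [NormedAddCommGroup H] [InnerProductSpace ℂ H]
    [CompleteSpace H] {ι : Type*} [Countable ι] [DecidableEq ι]
    (M : VonNeumannAlgebra H)
    (amp : (H →L[ℂ] H) →⋆ₐ[ℂ]
      (lp (fun _ : ι => H) 2 →L[ℂ] lp (fun _ : ι => H) 2))
    (hamp : ∀ (m : H →L[ℂ] H) (f : lp (fun _ : ι => H) 2) (i : ι),
      (amp m f : ∀ _ : ι, H) i = m (f i))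
    (ampK : (lp (fun _ : ι => ℂ) 2 →L[ℂ] lp (fun _ : ι => ℂ) 2) →⋆ₐ[ℂ]
      (lp (fun _ : ι => H) 2 →L[ℂ] lp (fun _ : ι => H) 2))
    (hampK : ∀ (t : lp (fun _ : ι => ℂ) 2 →L[ℂ] lp (fun _ : ι => ℂ) 2)
      (f : lp (fun _ : ι => H) 2) (i : ι),
      (ampK t f : ∀ _ : ι, H) i =
        ∑' j : ι, (⟪(lp.single 2 i (1 : ℂ) : lp (fun _ : ι => ℂ) 2),
          t (lp.single 2 j (1 : ℂ))⟫_ℂ) • f j) :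
    (∀ x : lp (fun _ : ι => H) 2 →L[ℂ] lp (fun _ : ι => H) 2,
      (∀ m' ∈ M.commutant, amp m' * x = x * amp m') ↔
        x ∈ Set.centralizer (Set.centralizer
          {y | ∃ m ∈ M, ∃ t, y = amp m * ampK t})) ∧
    (∀ x : H →L[ℂ] H, (∀ m' ∈ M.commutant, m' * x = x * m') → x ∈ M) :=
  stmt_11_general M amp hamp ampK hampK
end

section
/- Let X be a measurable space with projection-valued measure E on a Hilbert space K, and for each x let α(x) be chosen so that x ↦ α(x)(m) is a bounded measurable B(H)-valued function for each m ∈ M ⊆ B(H). If σ(m) = ∫ α(x)(m) ⊗ dE(x) defines, for unital *-homomorphisms α(x) : M → B(H), then σ is a unital *-homomorphism from M to B(H ⊗ K): σ(1) = 1, σ(m₁m₂) = σ(m₁)σ(m₂), and σ(m*) = σ(m)*. -/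
open scoped InnerProductSpace
open ContinuousLinearMap

/-- Let `M ⊆ B(H)` be a unital *-subalgebra, `E` a projection-valued
measure on a (countable, discrete) measurable space `X` acting on `K` — given by its
atoms: pairwise orthogonal self-adjoint idempotents `P x` with `∑ x, P x = 1` strongly —
and for each `x` a unital *-homomorphism `α x : M → B(H)`.  Model the Hilbert space
`H ⊗ K` abstractly as a Hilbert space `HK` with a bounded bilinear map
`tp : H × K → HK` satisfying `⟨ξ ⊗ η, ξ' ⊗ η'⟩ = ⟨ξ,ξ'⟩⟨η,η'⟩` and with total range.
If `σ(m) = ∫ α(x)(m) ⊗ dE(x)`, i.e. `σ(m)(ξ ⊗ η) = ∑ x, α x m ξ ⊗ P x η`, then `σ` is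
a unital *-homomorphism `M → B(H ⊗ K)`:  `σ 1 = 1`, `σ (m m') = σ m σ m'`, and
`σ (m*) = (σ m)*`. -/
theorem stmt_13 {H K HK X : Type*}
    [NormedAddCommGroup H] [InnerProductSpace ℂ H] [CompleteSpace H]
    [NormedAddCommGroup K] [InnerProductSpace ℂ K] [CompleteSpace K]
    [NormedAddCommGroup HK] [InnerProductSpace ℂ HK] [CompleteSpace HK]
    [Countable X]
    (tp : H →L[ℂ] K →L[ℂ] HK)
    (htp : ∀ (ξ ξ' : H) (η η' : K),
      ⟪tp ξ η, tp ξ' η'⟫_ℂ = ⟪ξ, ξ'⟫_ℂ * ⟪η, η'⟫_ℂ)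
    (hdense : (Submodule.span ℂ {z : HK | ∃ ξ η, z = tp ξ η}).topologicalClosure = ⊤)
    (M : StarSubalgebra ℂ (H →L[ℂ] H))
    (P : X → K →L[ℂ] K)
    (hPproj : ∀ x : X, IsSelfAdjoint (P x) ∧ IsIdempotentElem (P x))
    (hPorth : ∀ x y : X, x ≠ y → P x ∘L P y = 0)
    (hPsum : ∀ η : K, HasSum (fun x : X => P x η) η)
    (α : X → (M →⋆ₐ[ℂ] (H →L[ℂ] H)))
    (σ : M → (HK →L[ℂ] HK))
    (hσ : ∀ (m : M) (ξ : H) (η : K),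
      HasSum (fun x : X => tp (α x m ξ) (P x η)) (σ m (tp ξ η))) :
    σ 1 = 1 ∧ (∀ m m' : M, σ (m * m') = σ m * σ m') ∧
      (∀ m : M, σ (star m) = star (σ m)) := by

  classical
  have hd : Dense ((Submodule.span ℂ {z : HK | ∃ ξ η, z = tp ξ η}) : Set HK) :=
    Submodule.dense_iff_topologicalClosure_eq_top.mpr hdense
  have key : ∀ {W : Type _} [NormedAddCommGroup W] [NormedSpace ℂ W]
      (A B : HK →L[ℂ] W), (∀ ξ η, A (tp ξ η) = B (tp ξ η)) → A = B := by
    intro W _ _ A B h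
    refine ContinuousLinearMap.ext_on hd ?_
    rintro z ⟨ξ, η, rfl⟩
    exact h ξ η
  have hPmul : ∀ (x y : X) (η : K), P x (P y η) = if x = y then P x η else 0 := by
    intro x y η
    by_cases hxy : x = y
    · subst hxy
      simp only [if_pos rfl]
      have := (hPproj x).2
      calc P x (P x η) = (P x * P x) η := rfl
        _ = P x η := by rw [this]
    · simp only [if_neg hxy]
      have := hPorth x y hxy
      calc P x (P y η) = (P x ∘L P y) η := rfl
        _ = 0 := by rw [this]; rfl
  have hσ' : ∀ (m m' : M) (ξ : H) (η : K),
      σ m (σ m' (tp ξ η)) = σ (m * m') (tp ξ η) := by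
    intro m m' ξ η
    have h1 : HasSum (fun x : X => σ m (tp (α x m' ξ) (P x η)))
        (σ m (σ m' (tp ξ η))) := (σ m).hasSum (hσ m' ξ η)
    have h2 : ∀ x : X, σ m (tp (α x m' ξ) (P x η)) = tp (α x (m * m') ξ) (P x η) := by
      intro x
      have hs := hσ m (α x m' ξ) (P x η)
      have heq : (fun y : X => tp (α y m (α x m' ξ)) (P y (P x η)))
          = fun y : X => if y = x then tp (α x (m * m') ξ) (P x η) else 0 := by
        funext y
        by_cases hyx : y = x
        · subst hyx
          rw [if_pos rfl, hPmul y y, if_pos rfl]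
          congr 1
          rw [map_mul]
          rfl
        · rw [if_neg hyx, hPmul y x, if_neg hyx]
          simp
      rw [heq] at hs
      exact hs.unique (hasSum_ite_eq x _)
    rw [funext h2] at h1
    exact h1.unique (hσ (m * m') ξ η)
  refine ⟨?_, ?_, ?_⟩
  · refine key (σ 1) 1 fun ξ η => ?_
    have h1 := hσ 1 ξ η
    have h2 : HasSum (fun x : X => tp (α x 1 ξ) (P x η)) (tp ξ η) := by
      have := (tp ξ).hasSum (hPsum η)
      simpa [map_one] using this
    simpa using h1.unique h2
  · intro m m'
    refine key (σ (m * m')) (σ m * σ m') fun ξ η => ?_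
    rw [ContinuousLinearMap.mul_apply]
    exact (hσ' m m' ξ η).symm
  · intro m
    have hABinner : ∀ (ξ : H) (η : K) (ξ' : H) (η' : K),
        ⟪σ (star m) (tp ξ η), tp ξ' η'⟫_ℂ = ⟪tp ξ η, σ m (tp ξ' η')⟫_ℂ := by
      intro ξ η ξ' η'
      have h1 : HasSum (fun x : X => ⟪tp ξ' η', tp (α x (star m) ξ) (P x η)⟫_ℂ)
          ⟪tp ξ' η', σ (star m) (tp ξ η)⟫_ℂ :=
        (innerSL ℂ (tp ξ' η')).hasSum (hσ (star m) ξ η)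
      have h1' : HasSum (fun x : X => ⟪tp (α x (star m) ξ) (P x η), tp ξ' η'⟫_ℂ)
          ⟪σ (star m) (tp ξ η), tp ξ' η'⟫_ℂ := by
        have := h1.star
        simpa [inner_conj_symm] using this
      have h2 : HasSum (fun x : X => ⟪tp ξ η, tp (α x m ξ') (P x η')⟫_ℂ)
          ⟪tp ξ η, σ m (tp ξ' η')⟫_ℂ :=
        (innerSL ℂ (tp ξ η)).hasSum (hσ m ξ' η')
      have heq : (fun x : X => ⟪tp (α x (star m) ξ) (P x η), tp ξ' η'⟫_ℂ)
          = fun x : X => ⟪tp ξ η, tp (α x m ξ') (P x η')⟫_ℂ := by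
        funext x
        rw [htp, htp]
        have ha : (α x (star m) : H →L[ℂ] H) = star (α x m : H →L[ℂ] H) := by
          rw [← map_star]
        have h3 : ⟪α x (star m) ξ, ξ'⟫_ℂ = ⟪ξ, α x m ξ'⟫_ℂ := by
          rw [ha, ContinuousLinearMap.star_eq_adjoint,
            ContinuousLinearMap.adjoint_inner_left]
        have h4 : ⟪P x η, η'⟫_ℂ = ⟪η, P x η'⟫_ℂ := by
          conv_lhs => rw [← (hPproj x).1.star_eq]
          rw [ContinuousLinearMap.star_eq_adjoint,
            ContinuousLinearMap.adjoint_inner_left]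
        rw [h3, h4]
      rw [heq] at h1'
      exact h1'.unique h2
    have hadj : ∀ (ξ : H) (η : K) (ξ' : H) (η' : K),
        ⟪ContinuousLinearMap.adjoint (σ m) (tp ξ η), tp ξ' η'⟫_ℂ
          = ⟪tp ξ η, σ m (tp ξ' η')⟫_ℂ := fun ξ η ξ' η' =>
      ContinuousLinearMap.adjoint_inner_left _ _ _
    rw [ContinuousLinearMap.star_eq_adjoint]
    refine key (σ (star m)) (ContinuousLinearMap.adjoint (σ m)) fun ξ η => ?_
    refine ext_inner_right ℂ fun v => ?_
    have hfun : innerSL ℂ (σ (star m) (tp ξ η))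
        = innerSL ℂ (ContinuousLinearMap.adjoint (σ m) (tp ξ η)) := by
      refine ContinuousLinearMap.ext_on hd ?_
      rintro z ⟨ξ', η', rfl⟩
      simp only [innerSL_apply_apply]
      rw [hABinner, hadj]
    calc ⟪σ (star m) (tp ξ η), v⟫_ℂ = innerSL ℂ (σ (star m) (tp ξ η)) v := rfl
      _ = innerSL ℂ (ContinuousLinearMap.adjoint (σ m) (tp ξ η)) v := by rw [hfun]
      _ = _ := rfl
end
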